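/- For m ≥ 1 and α ∈ ℂ \ ℝ, the second divided difference of f_m(x) = (x-α)^{-m} satisfies f_m^[2](x₀,x₁,x₂) = -∑_{k=1}^{m} f_k^[1](x₀,x₁) · f_{m-k+1}(x₂) for all x₀,x₁,x₂ ∈ ℝ; in particular f_m^[2] lies in the algebraic tensor product C_b(ℝ) ⊗ C_b(ℝ) ⊗ C_b(ℝ). -/

import Mathlib

/-- Divided differences, defined recursively. -/
noncomputable def dd (f : ℝ → ℂ) : ℕ → (ℕ → ℝ) → ℂ
  | 0, x => f (x 0)
  | n + 1, x =>
    if x 0 = x 1 then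
      deriv (fun s => dd f n (fun i => if i = 0 then s else x (i + 1))) (x 1)
    else
      (dd f n (fun i => if i = 0 then x 0 else x (i + 1)) -
        dd f n (fun i => x (i + 1))) / (((x 0 : ℂ)) - ((x 1 : ℂ)))

/-- `f_{m,α}(x) = 1/(x-α)^m`. -/
noncomputable def fma (α : ℂ) (m : ℕ) (x : ℝ) : ℂ := 1 / ((x : ℂ) - α) ^ m

/-!
Put `u = (x₀ - α)⁻¹` and `v = (x₁ - α)⁻¹`, so that `f_k(x₀) = uᵏ`, `f_k(x₁) = vᵏ`
and `u - v = -(x₀ - x₁) u v`. The geometric sum for `uᵐ - vᵐ` then gives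
`f_m^[1](x₀, x₁) = -∑_{k=1}^m f_k(x₀) f_{m-k+1}(x₁)`,
which on the diagonal reads `f_m' = -m f_{m+1}`.
The second divided difference is the first divided difference in `x₀` of `x ↦ f_m^[1](x, x₂)`,
and the first divided difference is linear, so the formula applied twice expands `f_m^[2]` into
products `f_j(x₀) f_{k-j+1}(x₁) f_{m-k+1}(x₂)`; each `f_n` is continuous with
`|f_n| ≤ |Im α|⁻ⁿ`.
-/

open Finset

theorem dd_one (f : ℝ → ℂ) (x : ℕ → ℝ) :
    dd f 1 x =
      if x 0 = x 1 then deriv f (x 1) else (f (x 0) - f (x 1)) / (x 0 - x 1 : ℂ) := by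
  simp [dd]

theorem dd_one_congr (f : ℝ → ℂ) {x y : ℕ → ℝ} (h₀ : x 0 = y 0) (h₁ : x 1 = y 1) :
    dd f 1 x = dd f 1 y := by
  simp only [dd_one, h₀, h₁]

theorem dd_succ (f : ℝ → ℂ) (n : ℕ) (x : ℕ → ℝ) :
    dd f (n + 1) x = dd (fun s => dd f n (fun i => if i = 0 then s else x (i + 1))) 1 x := by
  rw [dd, dd_one]
  split_ifs
  · rfl
  · congr 3
    funext i
    split_ifs with hi <;> simp [hi]

theorem dd_one_sum_mul {ι : Type*} (S : Finset ι) (φ : ι → ℝ → ℂ) (c : ι → ℂ) (x : ℕ → ℝ)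
    (hφ : ∀ i ∈ S, DifferentiableAt ℝ (φ i) (x 1)) :
    dd (fun s => ∑ i ∈ S, φ i s * c i) 1 x = ∑ i ∈ S, dd (φ i) 1 x * c i := by
  simp only [dd_one]
  split_ifs
  · rw [deriv_fun_sum fun i hi => (hφ i hi).mul_const (c i)]
    exact sum_congr rfl fun i hi => deriv_mul_const (hφ i hi) (c i)
  · rw [← sum_sub_distrib, sum_div]
    exact sum_congr rfl fun i _ => by ring

theorem sum_Icc_one_eq_sum_range {M : Type*} [AddCommMonoid M] (f : ℕ → M) (m : ℕ) :
    ∑ k ∈ Icc 1 m, f k = ∑ i ∈ range m, f (i + 1) := by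
  rw [range_eq_Ico, sum_Ico_add', zero_add, Ico_add_one_right_eq_Icc]

theorem exists_fin_sum_mul_mul {ι X R : Type*} [Mul R] [AddCommMonoid R] (P : (X → R) → Prop)
    (S : Finset ι) (p q r : ι → X → R) (hp : ∀ i, P (p i)) (hq : ∀ i, P (q i))
    (hr : ∀ i, P (r i)) :
    ∃ (N : ℕ) (p' q' r' : Fin N → X → R),
      (∀ j, P (p' j)) ∧ (∀ j, P (q' j)) ∧ (∀ j, P (r' j)) ∧
      ∀ s t u, ∑ i ∈ S, p i s * q i t * r i u = ∑ j, p' j s * q' j t * r' j u := by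
  refine ⟨#S, fun j => p (S.equivFin.symm j), fun j => q (S.equivFin.symm j),
    fun j => r (S.equivFin.symm j), fun j => hp _, fun j => hq _, fun j => hr _, fun s t u => ?_⟩
  rw [← sum_coe_sort S]
  exact (S.equivFin.symm.sum_comp fun i : S => p i s * q i t * r i u).symm

section fma

variable {α : ℂ} (hα : α.im ≠ 0)
include hα

theorem ofReal_sub_ne_zero (x : ℝ) : (x : ℂ) - α ≠ 0 := by
  intro h
  apply hα
  simpa using (congrArg Complex.im (sub_eq_zero.mp h)).symm

omit hα in
theorem fma_eq_inv_pow (m : ℕ) (x : ℝ) : fma α m x = ((x : ℂ) - α)⁻¹ ^ m := by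
  simp [fma, inv_pow]

theorem hasDerivAt_fma (n : ℕ) (x : ℝ) :
    HasDerivAt (fma α n) (-n * fma α (n + 1) x) x := by
  have h := ((hasDerivAt_zpow (-(n : ℤ)) _ (Or.inl (ofReal_sub_ne_zero hα x))).comp_sub_const
    (x : ℂ) α).comp_ofReal
  have hf : (fun y : ℝ => ((y : ℂ) - α) ^ (-(n : ℤ))) = fma α n := by
    funext y
    simp [fma, zpow_neg]
  rw [hf, show -(n : ℤ) - 1 = -((n + 1 : ℕ) : ℤ) by push_cast; ring] at h
  convert h using 1
  rw [zpow_neg, zpow_natCast, fma, one_div]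
  push_cast
  ring

theorem continuous_fma (n : ℕ) : Continuous (fma α n) := by
  have := ofReal_sub_ne_zero hα
  simp only [funext (fma_eq_inv_pow (α := α) n)]
  fun_prop (disch := assumption)

theorem norm_fma_le (n : ℕ) (x : ℝ) : ‖fma α n x‖ ≤ |α.im|⁻¹ ^ n := by
  rw [fma_eq_inv_pow, norm_pow, norm_inv]
  gcongr
  simpa using Complex.abs_im_le_norm ((x : ℂ) - α)

theorem dd_fma_one (m : ℕ) (x : ℕ → ℝ) :
    dd (fma α m) 1 x = -∑ k ∈ Icc 1 m, fma α k (x 0) * fma α (m - k + 1) (x 1) := by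
  rw [dd_one]
  split_ifs with h
  · have hterm : ∀ k ∈ Icc 1 m,
        fma α k (x 1) * fma α (m - k + 1) (x 1) = fma α (m + 1) (x 1) := by
      intro k hk
      rw [mem_Icc] at hk
      simp only [fma_eq_inv_pow, ← pow_add]
      congr 1
      omega
    rw [(hasDerivAt_fma hα m _).deriv, h, sum_congr rfl hterm, sum_const, Nat.card_Icc,
      nsmul_eq_mul, add_tsub_cancel_right, neg_mul]
  · set u := ((x 0 : ℂ) - α)⁻¹
    set v := ((x 1 : ℂ) - α)⁻¹
    have hx : (x 0 - x 1 : ℂ) ≠ 0 := sub_ne_zero.mpr (mod_cast h)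
    have hsub : u - v = -(x 0 - x 1 : ℂ) * (u * v) := by
      simp only [u, v]
      field_simp [ofReal_sub_ne_zero hα]
      ring
    have hterm : ∀ i ∈ range m,
        u ^ (i + 1) * v ^ (m - (i + 1) + 1) = u * v * (u ^ i * v ^ (m - 1 - i)) := by
      intro i hi
      rw [mem_range] at hi
      rw [show m - (i + 1) + 1 = m - 1 - i + 1 by omega]
      ring
    simp only [fma_eq_inv_pow]
    rw [← geom_sum₂_mul, hsub, sum_Icc_one_eq_sum_range (fun k => u ^ k * v ^ (m - k + 1)),
      sum_congr rfl hterm, ← mul_sum, div_eq_iff hx]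
    ring

theorem dd_fma_two (m : ℕ) (x : ℕ → ℝ) :
    dd (fma α m) 2 x = -∑ k ∈ Icc 1 m, dd (fma α k) 1 x * fma α (m - k + 1) (x 2) := by
  have hslice : (fun s => dd (fma α m) 1 (fun i => if i = 0 then s else x (i + 1))) =
      fun s => ∑ k ∈ Icc 1 m, fma α k s * -fma α (m - k + 1) (x 2) := by
    funext s
    simp [dd_fma_one hα]
  rw [dd_succ, hslice, dd_one_sum_mul _ _ _ _ fun k _ => (hasDerivAt_fma hα k _).differentiableAt]
  simp

theorem dd_fma_two_eq_sum_sigma (m : ℕ) (x : ℕ → ℝ) :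
    dd (fma α m) 2 x = ∑ i ∈ (Icc 1 m).sigma (fun k => Icc 1 k),
      fma α i.2 (x 0) * fma α (i.1 - i.2 + 1) (x 1) * fma α (m - i.1 + 1) (x 2) := by
  rw [dd_fma_two hα, sum_sigma]
  simp only [dd_fma_one hα, neg_mul, sum_neg_distrib, neg_neg, sum_mul]

end fma

theorem fma_secondDividedDifference_general (α : ℂ) (hα : α.im ≠ 0) (m : ℕ) :
    (∀ x₀ x₁ x₂ : ℝ,
      dd (fma α m) 2 (fun j => if j = 0 then x₀ else if j = 1 then x₁ else x₂) =
        -∑ k ∈ Finset.Icc 1 m,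
          (dd (fma α k) 1 (fun j => if j = 0 then x₀ else x₁)) *
            fma α (m - k + 1) x₂) ∧
    ∃ (N : ℕ) (p q r : Fin N → ℝ → ℂ),
      (∀ j, Continuous (p j) ∧ ∃ C : ℝ, ∀ x, ‖p j x‖ ≤ C) ∧
      (∀ j, Continuous (q j) ∧ ∃ C : ℝ, ∀ x, ‖q j x‖ ≤ C) ∧
      (∀ j, Continuous (r j) ∧ ∃ C : ℝ, ∀ x, ‖r j x‖ ≤ C) ∧
      ∀ s t u : ℝ,
        dd (fma α m) 2 (fun j => if j = 0 then s else if j = 1 then t else u) =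
          ∑ j, p j s * q j t * r j u := by
  refine ⟨fun x₀ x₁ x₂ => ?_, ?_⟩
  · rw [dd_fma_two hα]
    exact congrArg _ (sum_congr rfl fun k _ => congrArg₂ _ (dd_one_congr _ rfl rfl) rfl)
  · have hfma : ∀ n, Continuous (fma α n) ∧ ∃ C : ℝ, ∀ x, ‖fma α n x‖ ≤ C :=
      fun n => ⟨continuous_fma hα n, _, norm_fma_le hα n⟩
    obtain ⟨N, p, q, r, hp, hq, hr, hsum⟩ := exists_fin_sum_mul_mul
      (fun f => Continuous f ∧ ∃ C : ℝ, ∀ x, ‖f x‖ ≤ C)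
      ((Icc 1 m).sigma fun k => Icc 1 k)
      (fun i => fma α i.2) (fun i => fma α (i.1 - i.2 + 1)) (fun i => fma α (m - i.1 + 1))
      (fun _ => hfma _) (fun _ => hfma _) (fun _ => hfma _)
    exact ⟨N, p, q, r, hp, hq, hr, fun s t u =>
      (dd_fma_two_eq_sum_sigma hα m _).trans (hsum s t u)⟩

/-- For `m ≥ 1` and `α ∈ ℂ \ ℝ`, the second divided difference of
`f_m(x) = (x-α)^{-m}` satisfies
`f_m^[2](x₀,x₁,x₂) = - ∑_{k=1}^m f_k^[1](x₀,x₁) · f_{m-k+1}(x₂)`;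
in particular `f_m^[2]` lies in the algebraic tensor product
`C_b(ℝ) ⊗ C_b(ℝ) ⊗ C_b(ℝ)`, i.e. it is a finite sum of products of bounded
continuous functions of the separate variables. -/
theorem fma_secondDividedDifference (α : ℂ) (hα : α.im ≠ 0) (m : ℕ) (hm : 1 ≤ m) :
    (∀ x₀ x₁ x₂ : ℝ,
      dd (fma α m) 2 (fun j => if j = 0 then x₀ else if j = 1 then x₁ else x₂) =
        -∑ k ∈ Finset.Icc 1 m,
          (dd (fma α k) 1 (fun j => if j = 0 then x₀ else x₁)) *
            fma α (m - k + 1) x₂) ∧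
    ∃ (N : ℕ) (p q r : Fin N → ℝ → ℂ),
      (∀ j, Continuous (p j) ∧ ∃ C : ℝ, ∀ x, ‖p j x‖ ≤ C) ∧
      (∀ j, Continuous (q j) ∧ ∃ C : ℝ, ∀ x, ‖q j x‖ ≤ C) ∧
      (∀ j, Continuous (r j) ∧ ∃ C : ℝ, ∀ x, ‖r j x‖ ≤ C) ∧
      ∀ s t u : ℝ,
        dd (fma α m) 2 (fun j => if j = 0 then s else if j = 1 then t else u) =
          ∑ j, p j s * q j t * r j u :=
  fma_secondDividedDifference_general α hα m
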